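/- arXiv:2203.09667 — 3 statements merged into one kernel-verified Lean document; each statement's English description precedes it below -/
import Mathlib

section
/- Let V be a de Vries algebra and S_V its set of concordant filters with the Stone-like topology generated by the sets â = {F : a ∈ F}. Then for every a ∈ V, the topological complement of the closure of â equals the set ¬a-hat; i.e., a concordant filter F lies in the closure of â iff ¬a ∉ F. -/
/-- A de Vries algebra structure on a complete Boolean algebra `B`:
a subordination relation `prec` satisfying axioms (A1)-(A7). -/
structure DeVries (B : Type*) [CompleteBooleanAlgebra B] where
  prec : B → B → Prop
  A1 : prec ⊤ ⊤
  A2 : ∀ {a b : B}, prec a b → a ≤ b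
  A3 : ∀ {a b c d : B}, a ≤ b → prec b c → c ≤ d → prec a d
  A4 : ∀ {a b c : B}, prec a b → prec a c → prec a (b ⊓ c)
  A5 : ∀ {a b : B}, prec a b → prec bᶜ aᶜ
  A6 : ∀ {a c : B}, prec a c → ∃ b, prec a b ∧ prec b c
  A7 : ∀ {a : B}, a ≠ ⊥ → ∃ b, b ≠ ⊥ ∧ prec b a

variable {B : Type*} [CompleteBooleanAlgebra B]

/-- A (proper) filter on `B`, as a set. -/
def IsProperFilter (F : Set B) : Prop :=
  ⊤ ∈ F ∧ ⊥ ∉ F ∧ (∀ a b : B, a ∈ F → a ≤ b → b ∈ F) ∧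
    (∀ a b : B, a ∈ F → b ∈ F → a ⊓ b ∈ F)

/-- A concordant filter: a proper filter in which every element has a ≺-predecessor. -/
def Concordant (V : DeVries B) (F : Set B) : Prop :=
  IsProperFilter F ∧ ∀ a ∈ F, ∃ b ∈ F, V.prec b a

/-- The dual filter space: the set of concordant filters. -/
def SV (V : DeVries B) : Type _ := {F : Set B // Concordant V F}

/-- Basic open set `â = {F : a ∈ F}`. -/
def hatt (V : DeVries B) (a : B) : Set (SV V) := {F : SV V | a ∈ F.1}

/-- The Stone-like topology on `SV V`, generated by the sets `â`. -/
instance instTopSV (V : DeVries B) : TopologicalSpace (SV V) :=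
  TopologicalSpace.generateFrom {U : Set (SV V) | ∃ a : B, U = hatt V a}

/-- Downward closure under the inclusion (specialization) order of filters. -/
def dclF (V : DeVries B) (A : Set (SV V)) : Set (SV V) :=
  {F : SV V | ∃ G ∈ A, F.1 ⊆ G.1}

/-- Interior in the upset topology of the inclusion order: all extensions lie in `A`. -/
def upIntF (V : DeVries B) (A : Set (SV V)) : Set (SV V) :=
  {F : SV V | ∀ G : SV V, F.1 ⊆ G.1 → G ∈ A}

/-!
A concordant filter `F` misses `â`'s closure exactly when some `b ∈ F` has `b̂ ∩ â = ∅`.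
If `¬a ∈ F` this happens with `b = ¬a`. Conversely, if `¬a ∉ F` then `b ⊓ a ≠ ⊥` for every
`b ∈ F`, and any nonzero element lies in a concordant filter: by (A7) it starts a descending
`≺`-chain of nonzero elements, whose upward closure is concordant.
-/

namespace IsProperFilter

variable {F : Set B}

lemma mem_of_le (hF : IsProperFilter F) {a b : B} (ha : a ∈ F) (hab : a ≤ b) : b ∈ F :=
  hF.2.2.1 a b ha hab

lemma inf_mem (hF : IsProperFilter F) {a b : B} (ha : a ∈ F) (hb : b ∈ F) : a ⊓ b ∈ F :=
  hF.2.2.2 a b ha hb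

lemma compl_notMem (hF : IsProperFilter F) {a : B} (ha : a ∈ F) : aᶜ ∉ F := fun hac =>
  hF.2.1 (inf_compl_self a ▸ hF.inf_mem ha hac)

end IsProperFilter

lemma isProperFilter_upperClosure_range {g : ℕ → B} (hg : Antitone g) (hne : ∀ n, g n ≠ ⊥) :
    IsProperFilter {x : B | ∃ n, g n ≤ x} := by
  refine ⟨⟨0, le_top⟩, fun ⟨n, hn⟩ => hne n (le_bot_iff.mp hn), ?_, ?_⟩
  · rintro x y ⟨n, hn⟩ hxy
    exact ⟨n, hn.trans hxy⟩
  · rintro x y ⟨n, hn⟩ ⟨m, hm⟩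
    exact ⟨max n m, le_inf ((hg (le_max_left n m)).trans hn) ((hg (le_max_right n m)).trans hm)⟩

lemma exists_concordant_mem (V : DeVries B) {c : B} (hc : c ≠ ⊥) :
    ∃ G : Set B, Concordant V G ∧ c ∈ G := by
  choose pred pred_ne pred_prec using fun x : {x : B // x ≠ ⊥} => V.A7 x.2
  let g : ℕ → {x : B // x ≠ ⊥} := fun n => Nat.rec ⟨c, hc⟩ (fun _ x => ⟨pred x, pred_ne x⟩) n
  have hstep : ∀ n, V.prec (g (n + 1)).1 (g n).1 := fun n => pred_prec (g n)
  have hanti : Antitone fun n => (g n).1 := antitone_nat_of_succ_le fun n => V.A2 (hstep n)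
  refine ⟨_, ⟨isProperFilter_upperClosure_range hanti fun n => (g n).2, ?_⟩, ⟨0, le_rfl⟩⟩
  rintro x ⟨n, hn⟩
  exact ⟨(g (n + 1)).1, ⟨n + 1, le_rfl⟩, V.A3 le_rfl (hstep n) hn⟩

lemma hatt_inf (V : DeVries B) (a b : B) : hatt V (a ⊓ b) = hatt V a ∩ hatt V b := by
  ext F
  exact ⟨fun h => ⟨F.2.1.mem_of_le h inf_le_left, F.2.1.mem_of_le h inf_le_right⟩,
    fun ⟨ha, hb⟩ => F.2.1.inf_mem ha hb⟩

lemma isTopologicalBasis_hatt (V : DeVries B) :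
    TopologicalSpace.IsTopologicalBasis {U : Set (SV V) | ∃ a : B, U = hatt V a} := by
  refine ⟨?_, ?_, rfl⟩
  · rintro _ ⟨a, rfl⟩ _ ⟨b, rfl⟩ F hF
    exact ⟨hatt V (a ⊓ b), ⟨a ⊓ b, rfl⟩, hatt_inf V a b ▸ hF, (hatt_inf V a b).le⟩
  · exact Set.eq_univ_of_forall fun F => Set.mem_sUnion.mpr ⟨hatt V ⊤, ⟨⊤, rfl⟩, F.2.1.1⟩

lemma mem_closure_hatt_iff (V : DeVries B) (a : B) (F : SV V) :
    F ∈ closure (hatt V a) ↔ aᶜ ∉ F.1 := by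
  rw [(isTopologicalBasis_hatt V).mem_closure_iff]
  constructor
  · intro h hac
    obtain ⟨G, hGac, hGa⟩ := h (hatt V aᶜ) ⟨aᶜ, rfl⟩ hac
    exact G.2.1.compl_notMem hGa hGac
  · rintro hac _ ⟨b, rfl⟩ hb
    have hne : b ⊓ a ≠ ⊥ := fun h =>
      hac (F.2.1.mem_of_le hb (le_compl_iff_disjoint_right.mpr (disjoint_iff.mpr h)))
    obtain ⟨G, hG, hbaG⟩ := exists_concordant_mem V hne
    exact ⟨⟨G, hG⟩, hG.1.mem_of_le hbaG inf_le_left, hG.1.mem_of_le hbaG inf_le_right⟩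

theorem stmt4 (V : DeVries B) (a : B) :
    (closure (hatt V a))ᶜ = hatt V aᶜ ∧
    ∀ F : SV V, F ∈ closure (hatt V a) ↔ aᶜ ∉ F.1 := by
  refine ⟨?_, mem_closure_hatt_iff V a⟩
  ext F
  rw [Set.mem_compl_iff, mem_closure_hatt_iff, not_not]
  rfl
end

section
/- Let X be an order-normal topological space with RO(X) ⊆ 𝒪ℛ𝒪(X). Then (RO(X), ≪) is a de Vries algebra, where U ≪ W iff closure(U) ⊆ ↓W. -/
/-- The specialization preorder: `x ≤ y` iff every open set containing `x` contains `y`. -/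
def specLE {X : Type*} [TopologicalSpace X] (x y : X) : Prop :=
  ∀ U : Set X, IsOpen U → x ∈ U → y ∈ U

/-- Downward closure of a set in the specialization preorder. -/
def dcl {X : Type*} [TopologicalSpace X] (A : Set X) : Set X :=
  {x : X | ∃ y ∈ A, specLE x y}

/-- Interior in the upset topology of the specialization preorder. -/
def upInt {X : Type*} [TopologicalSpace X] (A : Set X) : Set X :=
  {x : X | ∀ y : X, specLE x y → y ∈ A}

/-- Regular open: `U` equals the interior of its closure. -/
def RegOpen {X : Type*} [TopologicalSpace X] (U : Set X) : Prop :=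
  interior (closure U) = U

/-- Regular closed: `A` equals the closure of its interior. -/
def RegClosed {X : Type*} [TopologicalSpace X] (A : Set X) : Prop :=
  closure (interior A) = A

/-- Order-regular open: the upset-interior of the downward closure of `U` equals `U`. -/
def OrdRegOpen {X : Type*} [TopologicalSpace X] (U : Set X) : Prop :=
  upInt (dcl U) = U

/-- Order-normal space: any closed `A` and regular closed `B` with `A` disjoint from the
upset-interior of `B` are separated by disjoint opens `U`, `W` with `A ⊆ ↓U` and
`upInt B ⊆ W`. -/
def OrderNormal (X : Type*) [TopologicalSpace X] : Prop :=
  ∀ A B : Set X, IsClosed A → RegClosed B → Disjoint A (upInt B) →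
    ∃ U W : Set X, IsOpen U ∧ IsOpen W ∧ Disjoint U W ∧ A ⊆ dcl U ∧ upInt B ⊆ W

/-- Order-regular space. -/
def OrderRegular (X : Type*) [TopologicalSpace X] : Prop :=
  ∀ (A : Set X) (x : X), IsClosed A → x ∉ upInt A →
    ∃ U W : Set X, IsOpen U ∧ IsOpen W ∧ Disjoint U W ∧ x ∈ U ∧ upInt A ⊆ W

/-- The subordination relation `U ≪ W`: the closure of `U` is contained in the
downward closure of `W`. -/
def ll {X : Type*} [TopologicalSpace X] (U W : Set X) : Prop :=
  closure U ⊆ dcl W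

/-!
Order-regularity of the regular open sets makes `≪` self-dual: a point outside an order-regular
open `V = upInt (dcl V)` lies below a point outside `dcl V`, so `A ⊆ ↓V` forces `Vᶜ ⊆ ↓Aᶜ`.
With `A = closure U` this is (A5), and applied once more to `V = (closure U)ᶜ` it gives (A4).
Order-normality separates a closed `C ⊆ ↓W` from `upInt Wᶜ` by an open `G` with `C ⊆ ↓G` and
`closure G ⊆ ↓W`; replacing `G` by the regular open `interior (closure G)` interpolates, which is
(A6) for `C = closure U` and (A7) for `C = closure {x}` with `x ∈ U`.
-/

section

variable {X : Type*} [TopologicalSpace X]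

lemma specLE_iff_specializes {x y : X} : specLE x y ↔ y ⤳ x :=
  specializes_iff_forall_open.symm

lemma specLE_refl (x : X) : specLE x x := fun _ _ h => h

lemma subset_dcl (A : Set X) : A ⊆ dcl A := fun x hx => ⟨x, hx, specLE_refl x⟩

lemma dcl_mono {A B : Set X} (h : A ⊆ B) : dcl A ⊆ dcl B :=
  fun _ ⟨y, hyA, hxy⟩ => ⟨y, h hyA, hxy⟩

lemma upInt_mono {A B : Set X} (h : A ⊆ B) : upInt A ⊆ upInt B :=
  fun _ hx y hxy => h (hx y hxy)

lemma compl_upInt_compl (A : Set X) : (upInt Aᶜ)ᶜ = dcl A := by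
  ext x
  simp [upInt, dcl, and_comm]

lemma IsOpen.subset_upInt {U A : Set X} (hU : IsOpen U) (h : U ⊆ A) : U ⊆ upInt A :=
  fun _ hx _ hxy => h (hxy U hU hx)

lemma closure_singleton_subset_dcl {x : X} {U : Set X} (hx : x ∈ U) :
    closure {x} ⊆ dcl U :=
  fun _ hp => ⟨x, hx, specLE_iff_specializes.mpr (specializes_iff_mem_closure.mpr hp)⟩

lemma OrdRegOpen.compl_subset_dcl_compl {V A : Set X} (hV : OrdRegOpen V) (h : A ⊆ dcl V) :
    Vᶜ ⊆ dcl Aᶜ := by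
  have hA : dcl Aᶜ = (upInt A)ᶜ := by rw [← compl_upInt_compl, compl_compl]
  rw [← hV, hA]
  exact Set.compl_subset_compl.mpr (upInt_mono h)

lemma RegOpen.isOpen {U : Set X} (hU : RegOpen U) : IsOpen U :=
  hU ▸ isOpen_interior

lemma RegOpen.closure_compl_closure {U : Set X} (hU : RegOpen U) :
    closure (closure U)ᶜ = Uᶜ := by
  rw [closure_compl, hU]

lemma RegOpen.compl_closure {U : Set X} (hU : RegOpen U) : RegOpen (closure U)ᶜ := by
  rw [RegOpen, hU.closure_compl_closure, interior_compl]

lemma RegOpen.regClosed_compl {U : Set X} (hU : RegOpen U) : RegClosed Uᶜ := by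
  rw [RegClosed, interior_compl, closure_compl, hU]

lemma regOpen_interior_closure (s : Set X) : RegOpen (interior (closure s)) :=
  interior_closure_idem

lemma IsOpen.closure_interior_closure {G : Set X} (hG : IsOpen G) :
    closure (interior (closure G)) = closure G :=
  subset_antisymm (isClosed_closure.closure_subset_iff.mpr interior_subset)
    (closure_mono hG.subset_interior_closure)

lemma ll_univ : ll (Set.univ : Set X) Set.univ := by
  rw [ll, closure_univ]
  exact subset_dcl _

lemma ll.subset {U W : Set X} (hU : IsOpen U) (hW : OrdRegOpen W) (h : ll U W) : U ⊆ W :=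
  hW ▸ hU.subset_upInt (subset_closure.trans h)

lemma ll.mono {U₁ U₂ W₁ W₂ : Set X} (hU : U₁ ⊆ U₂) (h : ll U₂ W₁) (hW : W₁ ⊆ W₂) :
    ll U₁ W₂ :=
  (closure_mono hU).trans (h.trans (dcl_mono hW))

lemma ll.compl {U W : Set X} (hW : RegOpen W) (hW' : OrdRegOpen W) (h : ll U W) :
    ll (closure W)ᶜ (closure U)ᶜ := by
  rw [ll, hW.closure_compl_closure]
  exact hW'.compl_subset_dcl_compl h

lemma ll.inter {U W₁ W₂ : Set X} (hU : OrdRegOpen (closure U)ᶜ) (hW₁ : OrdRegOpen W₁)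
    (hW₂ : OrdRegOpen W₂) (h₁ : ll U W₁) (h₂ : ll U W₂) : ll U (W₁ ∩ W₂) := by
  have hcompl : (W₁ ∩ W₂)ᶜ ⊆ dcl (closure U)ᶜ := by
    rw [Set.compl_inter]
    exact Set.union_subset (hW₁.compl_subset_dcl_compl h₁) (hW₂.compl_subset_dcl_compl h₂)
  simpa only [ll, compl_compl] using hU.compl_subset_dcl_compl hcompl

lemma OrderNormal.exists_open_between (hN : OrderNormal X) {C W : Set X} (hC : IsClosed C)
    (hW : RegOpen W) (h : C ⊆ dcl W) :
    ∃ G : Set X, IsOpen G ∧ C ⊆ dcl G ∧ closure G ⊆ dcl W := by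
  have hdisj : Disjoint C (upInt Wᶜ) := by
    rwa [← Set.subset_compl_iff_disjoint_right, compl_upInt_compl]
  obtain ⟨G, H, hG, hH, hGH, hCG, hWH⟩ := hN C Wᶜ hC hW.regClosed_compl hdisj
  refine ⟨G, hG, hCG, ?_⟩
  rw [← compl_upInt_compl]
  exact Set.subset_compl_iff_disjoint_right.mpr ((hGH.closure_left hH).mono_right hWH)

lemma OrderNormal.exists_regOpen_between (hN : OrderNormal X) {C W : Set X} (hC : IsClosed C)
    (hW : RegOpen W) (h : C ⊆ dcl W) :
    ∃ Z : Set X, RegOpen Z ∧ C ⊆ dcl Z ∧ ll Z W := by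
  obtain ⟨G, hG, hCG, hGW⟩ := hN.exists_open_between hC hW h
  refine ⟨interior (closure G), regOpen_interior_closure G,
    hCG.trans (dcl_mono hG.subset_interior_closure), ?_⟩
  rw [ll, hG.closure_interior_closure]
  exact hGW

end

/-- `(RO(X), ≪)` is a de Vries algebra: the regular open sets (a complete Boolean
algebra with meet `∩`, complement `U^⊥ = (closure U)ᶜ`, `0 = ∅`, `1 = univ`)
satisfy axioms (A1)-(A7) for the relation `≪`. -/
theorem stmt13 (X : Type*) [TopologicalSpace X] (hN : OrderNormal X)
    (hRO : ∀ U : Set X, RegOpen U → OrdRegOpen U) :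
    -- (A1)
    ll (Set.univ : Set X) Set.univ ∧
    -- (A2)
    (∀ U W : Set X, RegOpen U → RegOpen W → ll U W → U ⊆ W) ∧
    -- (A3)
    (∀ U₁ U₂ W₁ W₂ : Set X, RegOpen U₁ → RegOpen U₂ → RegOpen W₁ → RegOpen W₂ →
      U₁ ⊆ U₂ → ll U₂ W₁ → W₁ ⊆ W₂ → ll U₁ W₂) ∧
    -- (A4)
    (∀ U W₁ W₂ : Set X, RegOpen U → RegOpen W₁ → RegOpen W₂ →
      ll U W₁ → ll U W₂ → ll U (W₁ ∩ W₂)) ∧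
    -- (A5)
    (∀ U W : Set X, RegOpen U → RegOpen W → ll U W → ll (closure W)ᶜ (closure U)ᶜ) ∧
    -- (A6)
    (∀ U W : Set X, RegOpen U → RegOpen W → ll U W →
      ∃ Z : Set X, RegOpen Z ∧ ll U Z ∧ ll Z W) ∧
    -- (A7)
    (∀ U : Set X, RegOpen U → U ≠ ∅ → ∃ Z : Set X, RegOpen Z ∧ Z ≠ ∅ ∧ ll Z U) := by
  refine ⟨ll_univ, fun U W hU hW h => h.subset hU.isOpen (hRO W hW),
    fun _ _ _ _ _ _ _ _ hU h hW => h.mono hU hW, ?_, fun U W _ hW h => h.compl hW (hRO W hW),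
    ?_, ?_⟩
  · intro U W₁ W₂ hU hW₁ hW₂ h₁ h₂
    exact h₁.inter (hRO _ hU.compl_closure) (hRO W₁ hW₁) (hRO W₂ hW₂) h₂
  · intro U W _ hW h
    exact hN.exists_regOpen_between isClosed_closure hW h
  · intro U hU hUne
    obtain ⟨x, hx⟩ := Set.nonempty_iff_ne_empty.mpr hUne
    obtain ⟨Z, hZ, hxZ, hZU⟩ :=
      hN.exists_regOpen_between isClosed_closure hU (closure_singleton_subset_dcl hx)
    obtain ⟨z, hz, _⟩ := hxZ (subset_closure rfl)
    exact ⟨Z, hZ, Set.nonempty_iff_ne_empty.mp ⟨z, hz⟩, hZU⟩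
end

section
/- Let h : V1 → V2 be a de Vries morphism. The induced map Λ(h) : S_{V2} → S_{V1}, F ↦ ↠(h⁻¹[F]), is continuous with respect to the Stone-like topologies; in fact Λ(h)⁻¹[â] = ⋃_{c ≺₁ a} (h(c))-hat for every a ∈ V1. -/
variable {B : Type*} [CompleteBooleanAlgebra B]

/-- A de Vries morphism between de Vries algebras. -/
structure DeVriesMor {B₁ B₂ : Type*} [CompleteBooleanAlgebra B₁] [CompleteBooleanAlgebra B₂]
    (V₁ : DeVries B₁) (V₂ : DeVries B₂) where
  toFun : B₁ → B₂
  mV1 : toFun ⊥ = ⊥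
  mV2 : ∀ a b : B₁, toFun (a ⊓ b) = toFun a ⊓ toFun b
  mV3 : ∀ a b : B₁, V₁.prec a b → V₂.prec (toFun aᶜ)ᶜ (toFun b)
  mV4 : ∀ a : B₁, toFun a = sSup {x : B₂ | ∃ b : B₁, V₁.prec b a ∧ x = toFun b}

lemma isOpen_hatt (V : DeVries B) (a : B) : IsOpen (hatt V a) :=
  TopologicalSpace.isOpen_generateFrom_of_mem ⟨a, rfl⟩

lemma continuous_iff_isOpen_preimage_hatt {X : Type*} [TopologicalSpace X] {V : DeVries B} {f : X → SV V} :
    Continuous f ↔ ∀ a : B, IsOpen (f ⁻¹' hatt V a) := by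
  rw [continuous_generateFrom_iff]
  exact ⟨fun hf a => hf _ ⟨a, rfl⟩, by rintro hf _ ⟨a, rfl⟩; exact hf a⟩

theorem stmt17 {B₂ : Type*} [CompleteBooleanAlgebra B₂]
    (V₁ : DeVries B) (V₂ : DeVries B₂) (h : DeVriesMor V₁ V₂)
    (Λh : SV V₂ → SV V₁)
    (hΛ : ∀ F : SV V₂, (Λh F).1 = {a : B | ∃ b : B, V₁.prec b a ∧ h.toFun b ∈ F.1}) :
    (∀ a : B, Λh ⁻¹' hatt V₁ a = ⋃ c ∈ {c : B | V₁.prec c a}, hatt V₂ (h.toFun c)) ∧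
    Continuous Λh := by
  have preimage_hatt (a : B) :
      Λh ⁻¹' hatt V₁ a = ⋃ c ∈ {c : B | V₁.prec c a}, hatt V₂ (h.toFun c) := by
    ext F
    simp only [Set.mem_preimage, hatt, Set.mem_ofPred_eq, Set.mem_iUnion, hΛ F, exists_prop]
  refine ⟨preimage_hatt, continuous_iff_isOpen_preimage_hatt.mpr fun a => ?_⟩
  rw [preimage_hatt a]
  exact isOpen_biUnion fun c _ => isOpen_hatt V₂ (h.toFun c)
end
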